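/- arXiv:1010.1620 — 2 statements merged into one kernel-verified Lean document; each statement's English description precedes it below -/
import Mathlib

section
/- Let P be a harmonic polynomial in m variables, homogeneous of degree k, and let j ≤ s be natural numbers. Then Δ^j(r^{2s}·P) = (∏_{t=0}^{j-1} 2(s-t)·(2(s-t) + 2k + m - 2)) · r^{2(s-j)}·P. -/
open MvPolynomial Finset

noncomputable section

/-- The Laplacian `ΔP = ∑ ∂_i² P`. -/
def lap (m : ℕ) (P : MvPolynomial (Fin m) ℂ) : MvPolynomial (Fin m) ℂ :=
  ∑ i, pderiv i (pderiv i P)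

/-- The Euler operator `E P = ∑ X_i ∂_i P`. -/
def eulerOp (m : ℕ) (P : MvPolynomial (Fin m) ℂ) : MvPolynomial (Fin m) ℂ :=
  ∑ i, X i * pderiv i P

/-- The polynomial `r² = ∑ X_i²`. -/
def r2 (m : ℕ) : MvPolynomial (Fin m) ℂ := ∑ i, X i ^ 2

/-- The Fischer inner product `⟨P,Q⟩ = ∑_α (∏_i α_i!)·conj(coeff_α P)·coeff_α Q`. -/
def fischer (m : ℕ) (P Q : MvPolynomial (Fin m) ℂ) : ℂ :=
  ∑ α ∈ P.support, (∏ i, ((α i).factorial : ℂ)) * (starRingEnd ℂ) (coeff α P) * coeff α Q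

/-! Leibniz's rule gives `Δ(r^{2n} P) = Δ(r^{2n}) P + 2 ∇r^{2n}·∇P + r^{2n} ΔP`. Since
`∇r^{2n} = 2n r^{2n-2} x`, Euler's identity for the homogeneous polynomials `r^{2n-2}` and `P`
evaluates the first two terms, so for harmonic `P` one application of `Δ` multiplies
`r^{2n} P` by `2n(2n + 2k + m - 2)` and lowers `n` by one. -/

section Laplacian

variable {m : ℕ}

lemma lap_smul (c : ℂ) (Q : MvPolynomial (Fin m) ℂ) : lap m (c • Q) = c • lap m Q := by
  simp [lap, smul_sum]

lemma lap_mul (f g : MvPolynomial (Fin m) ℂ) :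
    lap m (f * g) = lap m f * g + 2 * ∑ i, pderiv i f * pderiv i g + f * lap m g := by
  simp only [lap, pderiv_mul, map_add, sum_add_distrib, mul_sum, sum_mul, two_mul]
  abel

lemma isHomogeneous_r2 : (r2 m).IsHomogeneous 2 :=
  IsHomogeneous.sum _ _ _ fun i _ => isHomogeneous_X_pow i 2

lemma pderiv_r2_pow_succ (n : ℕ) (i : Fin m) :
    pderiv i (r2 m ^ (n + 1)) = (2 * (n + 1) : ℂ) • (r2 m ^ n * X i) := by
  have hr2 : pderiv i (r2 m) = 2 * X i := by
    simp [r2, pderiv_X, Pi.single_apply]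
  rw [pderiv_pow, hr2, Nat.add_sub_cancel, smul_eq_C_mul]
  simp only [map_mul, map_add, map_natCast, map_ofNat, map_one]
  push_cast
  ring

lemma lap_r2_pow_succ (n : ℕ) :
    lap m (r2 m ^ (n + 1)) = (2 * (n + 1) * (2 * n + m) : ℂ) • r2 m ^ n := by
  have heuler := (isHomogeneous_r2.pow n).sum_X_mul_pderiv (σ := Fin m)
  simp only [lap, pderiv_r2_pow_succ, Derivation.map_smul, Derivation.leibniz, pderiv_X_self,
    smul_eq_mul, mul_one, sum_add_distrib, ← smul_sum]
  rw [heuler, sum_const, card_univ, Fintype.card_fin, ← Nat.cast_smul_eq_nsmul ℂ,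
    ← Nat.cast_smul_eq_nsmul ℂ, ← add_smul, smul_smul]
  congr 1
  push_cast
  ring

lemma sum_pderiv_r2_pow_succ_mul_pderiv {k : ℕ} {P : MvPolynomial (Fin m) ℂ}
    (hP : P.IsHomogeneous k) (n : ℕ) :
    ∑ i, pderiv i (r2 m ^ (n + 1)) * pderiv i P = (2 * (n + 1) * k : ℂ) • (r2 m ^ n * P) := by
  simp only [pderiv_r2_pow_succ, smul_mul_assoc, mul_assoc (r2 m ^ n), ← smul_sum,
    ← mul_sum, hP.sum_X_mul_pderiv]
  rw [← Nat.cast_smul_eq_nsmul ℂ, mul_smul_comm, smul_smul]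

lemma lap_r2_pow_mul_of_harmonic {k : ℕ} {P : MvPolynomial (Fin m) ℂ}
    (hharm : lap m P = 0) (hhom : P.IsHomogeneous k) (n : ℕ) :
    lap m (r2 m ^ n * P) = (2 * n * (2 * n + 2 * k + m - 2) : ℂ) • (r2 m ^ (n - 1) * P) := by
  rcases n with _ | n
  · simp [hharm] -- the coefficient vanishes, so the truncated `0 - 1` is harmless
  rw [lap_mul, hharm, mul_zero, add_zero, lap_r2_pow_succ, sum_pderiv_r2_pow_succ_mul_pderiv hhom,
    Nat.add_sub_cancel, smul_mul_assoc, two_mul (_ • _ : MvPolynomial (Fin m) ℂ), ← add_smul,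
    ← add_smul]
  congr 1
  push_cast
  ring

end Laplacian

theorem stmt11 (m k s j : ℕ) (hj : j ≤ s) (P : MvPolynomial (Fin m) ℂ)
    (hharm : lap m P = 0) (hhom : P.IsHomogeneous k) :
    (lap m)^[j] (r2 m ^ s * P)
      = (∏ t ∈ range j,
          (2 * ((s : ℂ) - (t : ℂ)) * (2 * ((s : ℂ) - (t : ℂ)) + 2 * (k : ℂ) + (m : ℂ) - 2)))
          • (r2 m ^ (s - j) * P) := by
  induction j with
  | zero => simp
  | succ j ih =>
    rw [Function.iterate_succ_apply', ih (by omega), lap_smul,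
      lap_r2_pow_mul_of_harmonic hharm hhom, smul_smul, prod_range_succ, Nat.sub_sub,
      Nat.cast_sub (by omega : j ≤ s), mul_comm]

end
end

section
/- Let P be a harmonic polynomial in m variables, homogeneous of degree k, and let s ∈ ℕ. Then the Fischer inner product satisfies ⟨r^{2s}·P, r^{2s}·P⟩ = 2^s · s! · (∏_{t=0}^{s-1}(2k + m + 2t)) · ⟨P, P⟩. -/
/-!
Multiplication by `X i` is the Fischer adjoint of `∂_i`, hence multiplication by `r²` is the
adjoint of `Δ`. From `Δ(r² Q) = 2m Q + 4 E Q + r² ΔQ` and Euler's identity `E Q = n Q` for `Q`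
homogeneous of degree `n`, one gets `Δ(r^{2s+2} P) = 2(s+1)(2k+m+2s) r^{2s} P` for `P` harmonic
and homogeneous of degree `k`. Thus `⟨r^{2s+2}P, r^{2s+2}P⟩ = ⟨r^{2s}P, Δ(r^{2s+2}P)⟩` peels
off one factor `2(s+1)(2k+m+2s)` at a time.
-/

open MvPolynomial Finset

noncomputable section

section

variable {m : ℕ}

def fischerWeight (α : Fin m →₀ ℕ) : ℂ := ∏ i, ((α i).factorial : ℂ)

lemma fischerWeight_add_single (α : Fin m →₀ ℕ) (i : Fin m) :
    fischerWeight (α + Finsupp.single i 1) = ((α i : ℂ) + 1) * fischerWeight α := by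
  simp only [fischerWeight, ← mul_prod_erase univ _ (mem_univ i), Finsupp.add_apply,
    Finsupp.single_eq_same, Nat.factorial_succ, Nat.cast_mul, Nat.cast_succ, mul_assoc]
  congr 2
  refine prod_congr rfl fun j hj => ?_
  rw [Finsupp.single_eq_of_ne (ne_of_mem_erase hj), add_zero]

lemma fischer_eq_sum_of_support_subset {P : MvPolynomial (Fin m) ℂ}
    {S : Finset (Fin m →₀ ℕ)} (h : P.support ⊆ S) (Q : MvPolynomial (Fin m) ℂ) :
    fischer m P Q = ∑ α ∈ S, fischerWeight α * (starRingEnd ℂ) (coeff α P) * coeff α Q :=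
  sum_subset h fun α _ hα => by rw [notMem_support_iff.mp hα]; simp

lemma fischer_add_left (P₁ P₂ Q : MvPolynomial (Fin m) ℂ) :
    fischer m (P₁ + P₂) Q = fischer m P₁ Q + fischer m P₂ Q := by
  classical
  rw [fischer_eq_sum_of_support_subset support_add,
    fischer_eq_sum_of_support_subset subset_union_left,
    fischer_eq_sum_of_support_subset subset_union_right, ← sum_add_distrib]
  refine sum_congr rfl fun α _ => ?_
  rw [coeff_add, map_add]
  ring

lemma fischer_sum_left {ι : Type*} (s : Finset ι) (P : ι → MvPolynomial (Fin m) ℂ)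
    (Q : MvPolynomial (Fin m) ℂ) :
    fischer m (∑ j ∈ s, P j) Q = ∑ j ∈ s, fischer m (P j) Q :=
  map_sum (AddMonoidHom.mk' (fischer m · Q) (fischer_add_left · · Q)) P s

lemma fischer_sum_right {ι : Type*} (s : Finset ι) (P : MvPolynomial (Fin m) ℂ)
    (Q : ι → MvPolynomial (Fin m) ℂ) :
    fischer m P (∑ j ∈ s, Q j) = ∑ j ∈ s, fischer m P (Q j) := by
  simp only [fischer, coeff_sum, mul_sum]
  exact sum_comm

lemma fischer_smul_right (c : ℂ) (P Q : MvPolynomial (Fin m) ℂ) :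
    fischer m P (c • Q) = c * fischer m P Q := by
  simp only [fischer, coeff_smul, smul_eq_mul, mul_sum]
  exact sum_congr rfl fun α _ => by ring

lemma fischer_X_mul (i : Fin m) (Q R : MvPolynomial (Fin m) ℂ) :
    fischer m (X i * Q) R = fischer m Q (pderiv i R) := by
  simp only [fischer, support_X_mul, sum_map, addLeftEmbedding_apply, coeff_X_mul, coeff_pderiv]
  refine sum_congr rfl fun β _ => ?_
  rw [add_comm (Finsupp.single i 1), ← fischerWeight, fischerWeight_add_single, fischerWeight]
  ring

lemma fischer_r2_mul (Q R : MvPolynomial (Fin m) ℂ) :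
    fischer m (r2 m * Q) R = fischer m Q (lap m R) := by
  have h : r2 m * Q = ∑ i, X i * (X i * Q) := by
    simp only [r2, sum_mul, sq, mul_assoc]
  simp only [h, lap, fischer_sum_left, fischer_sum_right, fischer_X_mul]

lemma pderiv_r2 (i : Fin m) : pderiv i (r2 m) = 2 • X i := by
  rw [r2, map_sum, sum_eq_single i (fun j _ hj => by simp [pderiv_X_of_ne hj]) (by simp)]
  simp

lemma pderiv_pderiv_r2_mul (i : Fin m) (Q : MvPolynomial (Fin m) ℂ) :
    pderiv i (pderiv i (r2 m * Q))
      = 2 * Q + 4 * (X i * pderiv i Q) + r2 m * pderiv i (pderiv i Q) := by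
  simp only [Derivation.leibniz, pderiv_r2, smul_eq_mul, map_add, map_nsmul, pderiv_X_self]
  ring

lemma lap_r2_mul (Q : MvPolynomial (Fin m) ℂ) :
    lap m (r2 m * Q) = (2 * m) • Q + 4 • eulerOp m Q + r2 m * lap m Q := by
  simp only [lap, eulerOp, pderiv_pderiv_r2_mul, sum_add_distrib, sum_const, card_univ,
    Fintype.card_fin, ← mul_sum, nsmul_eq_mul]
  push_cast
  ring

lemma lap_r2_mul_of_isHomogeneous {n : ℕ} {Q : MvPolynomial (Fin m) ℂ}
    (hQ : Q.IsHomogeneous n) : lap m (r2 m * Q) = (2 * m + 4 * n) • Q + r2 m * lap m Q := by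
  rw [lap_r2_mul, eulerOp, hQ.sum_X_mul_pderiv, smul_smul, ← add_smul]

lemma lap_r2_pow_succ_mul {k : ℕ} {P : MvPolynomial (Fin m) ℂ}
    (hharm : lap m P = 0) (hhom : P.IsHomogeneous k) (s : ℕ) :
    lap m (r2 m ^ (s + 1) * P) = (2 * (s + 1) * (2 * k + m + 2 * s)) • (r2 m ^ s * P) := by
  induction s with
  | zero =>
    rw [pow_one, pow_zero, one_mul, lap_r2_mul_of_isHomogeneous hhom, hharm, mul_zero, add_zero]
    ring_nf
  | succ s ih =>
    have hhom' := (isHomogeneous_r2.pow (s + 1)).mul hhom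
    rw [pow_succ', mul_assoc, lap_r2_mul_of_isHomogeneous hhom', ih, mul_smul_comm, ← mul_assoc,
      ← pow_succ', ← add_smul]
    congr 1
    ring

lemma fischer_r2_pow_succ_mul_self {k : ℕ} {P : MvPolynomial (Fin m) ℂ}
    (hharm : lap m P = 0) (hhom : P.IsHomogeneous k) (s : ℕ) :
    fischer m (r2 m ^ (s + 1) * P) (r2 m ^ (s + 1) * P)
      = (2 * (s + 1) * (2 * k + m + 2 * s) : ℕ) * fischer m (r2 m ^ s * P) (r2 m ^ s * P) := by
  rw [pow_succ', mul_assoc, fischer_r2_mul, ← mul_assoc, ← pow_succ',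
    lap_r2_pow_succ_mul hharm hhom, ← Nat.cast_smul_eq_nsmul ℂ, fischer_smul_right]

end

theorem stmt12 (m k s : ℕ) (P : MvPolynomial (Fin m) ℂ)
    (hharm : lap m P = 0) (hhom : P.IsHomogeneous k) :
    fischer m (r2 m ^ s * P) (r2 m ^ s * P)
      = (2 : ℂ) ^ s * (Nat.factorial s : ℂ)
          * (∏ t ∈ range s, (2 * (k : ℂ) + (m : ℂ) + 2 * (t : ℂ))) * fischer m P P := by
  induction s with
  | zero => simp
  | succ s ih =>
    rw [fischer_r2_pow_succ_mul_self hharm hhom, ih, prod_range_succ, Nat.factorial_succ]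
    push_cast
    ring

end
end
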